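/- For all real numbers α, β, γ, the bracket {f,g}(x) = (∇f(x))ᵀ P^{αβγ}(x) ∇g(x) associated with the matrix field P^{αβγ} = αP¹ + βP² + γP³ satisfies the Jacobi identity {f,{g,h}} + {g,{h,f}} + {h,{f,g}} = 0 for all smooth functions f, g, h : ℝ³ → ℝ; in particular P¹, P², P³ are pairwise compatible Poisson structures. -/

import Mathlib

open Matrix

/-- The gradient of a function on ℝ³. -/
noncomputable def grad (f : (Fin 3 → ℝ) → ℝ) (x : Fin 3 → ℝ) : Fin 3 → ℝ :=
  fun j => fderiv ℝ f x (Pi.single j 1)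

/-- The bracket {f,g}(x) = (∇f(x))ᵀ P(x) ∇g(x) associated with a matrix field P. -/
noncomputable def bracket (P : (Fin 3 → ℝ) → Matrix (Fin 3) (Fin 3) ℝ)
    (f g : (Fin 3 → ℝ) → ℝ) (x : Fin 3 → ℝ) : ℝ :=
  dotProduct (grad f x) ((P x).mulVec (grad g x))

/-- The Poisson matrix P¹. -/
def P1 (x : Fin 3 → ℝ) : Matrix (Fin 3) (Fin 3) ℝ :=
  !![0, x 2, -(x 1); -(x 2), 0, 0; x 1, 0, 0]

/-- The Poisson matrix P². -/
noncomputable def P2 (x : Fin 3 → ℝ) : Matrix (Fin 3) (Fin 3) ℝ :=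
  !![0, 0, x 1 / 2; 0, 0, -(x 0) / 2; -(x 1) / 2, x 0 / 2, 0]

/-- The Poisson matrix P³. -/
noncomputable def P3 (x : Fin 3 → ℝ) : Matrix (Fin 3) (Fin 3) ℝ :=
  !![0, 0, -(x 1) / 2; 0, 0, x 0 / 2; x 1 / 2, -(x 0) / 2, 0]

noncomputable def H (f : (Fin 3 → ℝ) → ℝ) (x : Fin 3 → ℝ) (i j : Fin 3) : ℝ :=
  fderiv ℝ (fderiv ℝ f) x (Pi.single i 1) (Pi.single j 1)

lemma H_symm {f : (Fin 3 → ℝ) → ℝ} (hf : ContDiff ℝ (⊤ : ℕ∞) f) (x : Fin 3 → ℝ) (i j : Fin 3) :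
    H f x i j = H f x j i :=
  second_derivative_symmetric (fun y => ((hf.differentiable (by simp)) y).hasFDerivAt)
    (((hf.fderiv_right (m := 1) (by exact WithTop.coe_le_coe.mpr le_top)).differentiable one_ne_zero x).hasFDerivAt) _ _

lemma hasFDerivAt_grad {f : (Fin 3 → ℝ) → ℝ} (hf : ContDiff ℝ (⊤ : ℕ∞) f) (i : Fin 3) (x : Fin 3 → ℝ) :
    HasFDerivAt (fun y => grad f y i)
      ((ContinuousLinearMap.apply ℝ ℝ ((Pi.single i 1 : Fin 3 → ℝ))).comp
        (fderiv ℝ (fderiv ℝ f) x)) x := by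
  have h1 : DifferentiableAt ℝ (fderiv ℝ f) x :=
    ((hf.fderiv_right (m := 1) (by exact WithTop.coe_le_coe.mpr le_top)).differentiable one_ne_zero) x
  exact (ContinuousLinearMap.apply ℝ ℝ _).hasFDerivAt.comp x h1.hasFDerivAt

lemma bracket_eq (α β γ : ℝ) (f g : (Fin 3 → ℝ) → ℝ) :
    bracket (fun y => α • P1 y + β • P2 y + γ • P3 y) f g = fun x =>
      (α * x 2) * (grad f x 0 * grad g x 1 - grad f x 1 * grad g x 0)
      + ((β/2 - γ/2 - α) * x 1) * (grad f x 0 * grad g x 2 - grad f x 2 * grad g x 0)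
      + ((γ/2 - β/2) * x 0) * (grad f x 1 * grad g x 2 - grad f x 2 * grad g x 1) := by
  funext x
  simp [bracket, dotProduct, mulVec, Fin.sum_univ_three, P1, P2, P3]
  ring

lemma grad_bracket (α β γ : ℝ) {f g : (Fin 3 → ℝ) → ℝ}
    (hf : ContDiff ℝ (⊤ : ℕ∞) f) (hg : ContDiff ℝ (⊤ : ℕ∞) g) (x : Fin 3 → ℝ) (l : Fin 3) :
    grad (bracket (fun y => α • P1 y + β • P2 y + γ • P3 y) f g) x l =
      α * (if (2:Fin 3) = l then 1 else 0)
        * (grad f x 0 * grad g x 1 - grad f x 1 * grad g x 0)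
      + α * x 2 * (H f x l 0 * grad g x 1 + grad f x 0 * H g x l 1
          - H f x l 1 * grad g x 0 - grad f x 1 * H g x l 0)
      + (β/2 - γ/2 - α) * (if (1:Fin 3) = l then 1 else 0)
        * (grad f x 0 * grad g x 2 - grad f x 2 * grad g x 0)
      + (β/2 - γ/2 - α) * x 1 * (H f x l 0 * grad g x 2 + grad f x 0 * H g x l 2
          - H f x l 2 * grad g x 0 - grad f x 2 * H g x l 0)
      + (γ/2 - β/2) * (if (0:Fin 3) = l then 1 else 0)
        * (grad f x 1 * grad g x 2 - grad f x 2 * grad g x 1)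
      + (γ/2 - β/2) * x 0 * (H f x l 1 * grad g x 2 + grad f x 1 * H g x l 2
          - H f x l 2 * grad g x 1 - grad f x 2 * H g x l 1) := by
  have hc : ∀ k : Fin 3, HasFDerivAt (fun y : Fin 3 → ℝ => y k)
      (ContinuousLinearMap.proj k : (Fin 3 → ℝ) →L[ℝ] ℝ) x :=
    fun k => hasFDerivAt_apply k x
  have hF := fun i => hasFDerivAt_grad hf i x
  have hG := fun i => hasFDerivAt_grad hg i x
  have h01 := (HasFDerivAt.const_mul (hc 2) α).mul
    (((hF 0).mul (hG 1)).sub ((hF 1).mul (hG 0)))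
  have h02 := (HasFDerivAt.const_mul (hc 1) (β/2 - γ/2 - α)).mul
    (((hF 0).mul (hG 2)).sub ((hF 2).mul (hG 0)))
  have h12 := (HasFDerivAt.const_mul (hc 0) (γ/2 - β/2)).mul
    (((hF 1).mul (hG 2)).sub ((hF 2).mul (hG 1)))
  have hB := (h01.add h02).add h12
  replace hB := hB.congr_of_eventuallyEq (f₁ := bracket (fun y => α • P1 y + β • P2 y + γ • P3 y) f g)
    (Filter.Eventually.of_forall fun y => by rw [bracket_eq α β γ f g]; rfl)
  show fderiv ℝ (bracket (fun y => α • P1 y + β • P2 y + γ • P3 y) f g) x (Pi.single l 1) = _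
  rw [hB.fderiv]
  simp [H, grad, Pi.single_apply]
  split_ifs <;> ring


set_option maxHeartbeats 2000000 in
/-- For all real α, β, γ, the bracket associated with P^{αβγ} = αP¹ + βP² + γP³
satisfies the Jacobi identity; in particular P¹, P², P³ are pairwise compatible
Poisson structures. -/
theorem jacobi_identity_P_alpha_beta_gamma (α β γ : ℝ)
    (f g h : (Fin 3 → ℝ) → ℝ)
    (hf : ContDiff ℝ (⊤ : ℕ∞) f) (hg : ContDiff ℝ (⊤ : ℕ∞) g) (hh : ContDiff ℝ (⊤ : ℕ∞) h) :
    ∀ x : Fin 3 → ℝ,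
      bracket (fun y => α • P1 y + β • P2 y + γ • P3 y) f
        (bracket (fun y => α • P1 y + β • P2 y + γ • P3 y) g h) x +
      bracket (fun y => α • P1 y + β • P2 y + γ • P3 y) g
        (bracket (fun y => α • P1 y + β • P2 y + γ • P3 y) h f) x +
      bracket (fun y => α • P1 y + β • P2 y + γ • P3 y) h
        (bracket (fun y => α • P1 y + β • P2 y + γ • P3 y) f g) x = 0 := by
  intro x
  conv_lhs =>
    rw [bracket_eq α β γ f (bracket _ g h), bracket_eq α β γ g (bracket _ h f),
      bracket_eq α β γ h (bracket _ f g)]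
  simp only
  rw [grad_bracket α β γ hg hh x 0, grad_bracket α β γ hg hh x 1, grad_bracket α β γ hg hh x 2,
    grad_bracket α β γ hh hf x 0, grad_bracket α β γ hh hf x 1, grad_bracket α β γ hh hf x 2,
    grad_bracket α β γ hf hg x 0, grad_bracket α β γ hf hg x 1, grad_bracket α β γ hf hg x 2]
  simp only [Fin.reduceEq, reduceIte, mul_one, mul_zero, zero_mul, zero_add, add_zero]
  rw [show H f x 1 0 = H f x 0 1 from H_symm hf x 1 0,
    show H f x 2 0 = H f x 0 2 from H_symm hf x 2 0,
    show H f x 2 1 = H f x 1 2 from H_symm hf x 2 1,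
    show H g x 1 0 = H g x 0 1 from H_symm hg x 1 0,
    show H g x 2 0 = H g x 0 2 from H_symm hg x 2 0,
    show H g x 2 1 = H g x 1 2 from H_symm hg x 2 1,
    show H h x 1 0 = H h x 0 1 from H_symm hh x 1 0,
    show H h x 2 0 = H h x 0 2 from H_symm hh x 2 0,
    show H h x 2 1 = H h x 1 2 from H_symm hh x 2 1]
  ring
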